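/- Suppose W = U' · V'ᵀ with U' ∈ ℝ^{m×r}, V' ∈ ℝ^{n×r}, and suppose |U'| = h₀ · ℓ_uᵀ and |V'| = g₀ · ℓ_vᵀ exactly (rank-1 nonnegative factorizations with h₀ ∈ ℝ^m, g₀ ∈ ℝ^n, ℓ_u, ℓ_v ∈ ℝ^r all entrywise nonnegative). Then with U_sign = sign(U'), V_sign = sign(V'), and ℓ₀ = ℓ_u ⊙ ℓ_v (entrywise product), one has W = diag(h₀) · U_sign · diag(ℓ₀) · V_signᵀ · diag(g₀). That is, Dual-SVID initialization is exact when the magnitude matrices are exactly rank-1. -/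

import Mathlib

open Matrix

noncomputable def signMat {m n : Type*} (A : Matrix m n ℝ) : Matrix m n ℝ :=
  fun i j => if 0 ≤ A i j then 1 else -1

theorem signMat_mul_abs {m n : Type*} (A : Matrix m n ℝ) (i : m) (j : n) :
    signMat A i j * |A i j| = A i j := by
  unfold signMat
  split_ifs with h
  · rw [abs_of_nonneg h, one_mul]
  · rw [abs_of_neg (not_le.mp h), neg_one_mul, neg_neg]

theorem eq_diagonal_mul_signMat_mul_diagonal {m n : Type*} [Fintype m] [Fintype n]
    [DecidableEq m] [DecidableEq n] (A : Matrix m n ℝ) (h : m → ℝ) (l : n → ℝ)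
    (hA : ∀ i j, |A i j| = h i * l j) :
    A = diagonal h * signMat A * diagonal l := by
  ext i j
  rw [mul_diagonal, diagonal_mul, ← signMat_mul_abs A i j, hA]
  ring

theorem dual_svid_exact_general (m n r : ℕ)
    (W : Matrix (Fin m) (Fin n) ℝ)
    (U' : Matrix (Fin m) (Fin r) ℝ) (V' : Matrix (Fin n) (Fin r) ℝ)
    (hW : W = U' * V'ᵀ)
    (h0 : Fin m → ℝ) (g0 : Fin n → ℝ) (lu lv : Fin r → ℝ)
    (hU : ∀ i k, |U' i k| = h0 i * lu k)
    (hV : ∀ j k, |V' j k| = g0 j * lv k) :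
    W = diagonal h0 * signMat U' * diagonal (fun k => lu k * lv k) *
          (signMat V')ᵀ * diagonal g0 := by
  calc W = (diagonal h0 * signMat U' * diagonal lu) *
        (diagonal g0 * signMat V' * diagonal lv)ᵀ := by
        rw [hW, ← eq_diagonal_mul_signMat_mul_diagonal U' h0 lu hU,
          ← eq_diagonal_mul_signMat_mul_diagonal V' g0 lv hV]
    _ = _ := by
        simp only [transpose_mul, diagonal_transpose, ← diagonal_mul_diagonal, Matrix.mul_assoc]

theorem dual_svid_exact (m n r : ℕ)
    (W : Matrix (Fin m) (Fin n) ℝ)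
    (U' : Matrix (Fin m) (Fin r) ℝ) (V' : Matrix (Fin n) (Fin r) ℝ)
    (hW : W = U' * V'ᵀ)
    (h0 : Fin m → ℝ) (g0 : Fin n → ℝ) (lu lv : Fin r → ℝ)
    (hh0 : ∀ i, 0 ≤ h0 i) (hg0 : ∀ j, 0 ≤ g0 j)
    (hlu : ∀ k, 0 ≤ lu k) (hlv : ∀ k, 0 ≤ lv k)
    (hU : ∀ i k, |U' i k| = h0 i * lu k)
    (hV : ∀ j k, |V' j k| = g0 j * lv k) :
    W = diagonal h0 * signMat U' * diagonal (fun k => lu k * lv k) *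
          (signMat V')ᵀ * diagonal g0 :=
  dual_svid_exact_general m n r W U' V' hW h0 g0 lu lv hU hV
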